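/- Let P and Q be probability measures on a measurable space X with P ≪ Q and Radon–Nikodym derivative w* = dP/dQ satisfying 0 ≤ w*(x) ≤ M_3 for all x. Let φ_1,…,φ_L : X → ℝ be measurable with |φ_ℓ(x)|² ≤ M_2 for all ℓ ≤ L and all x, and ∫ φ_ℓ dP = 0 for all ℓ ≤ L; set k_L(x,y) = ∑_{ℓ=1}^L φ_ℓ(x)φ_ℓ(y). Let n be even, x_1,…,x_n i.i.d. with law Q, D_0 = {1,…,n/2}, D_1 = {n/2+1,…,n}, and define the control-variate weights w_i = (1/n) w*(x_i) − (2/n²) ∑_{j∈D_1} w*(x_i) w*(x_j) k_L(x_j, x_i) for i ∈ D_0, and symmetrically with D_0 for i ∈ D_1. Then there exists a constant c > 0 depending only on M_2 and M_3 such that for every L ≥ 1, every even n, and every t ∈ (0, 1], ℙ( ∑_{i=1}^n w_i < 1 − t ) ≤ 2 exp( − c n t² / L² ). -/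

import Mathlib

open MeasureTheory

universe u

/-!
Put `ψ_ℓ = w* φ_ℓ`, so that `∫ ψ_ℓ dQ = ∫ φ_ℓ dP = 0`. Because `k_L` is a finite sum of products,
the weights add up to `S = (1/n) ∑_i w*(x_i) - (4/n²) ∑_ℓ A_ℓ B_ℓ`, where
`A_ℓ = ∑_{i ∈ D₀} ψ_ℓ(x_i)` and `B_ℓ = ∑_{j ∈ D₁} ψ_ℓ(x_j)` are sums of `m = n/2` i.i.d. bounded
centred variables. If `∑_i (1 - w*(x_i)) < m t` and `|A_ℓ|, |B_ℓ| < m √(t / 2L)` for every `ℓ`,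
then `S ≥ 1 - t`. Hoeffding's inequality and a union bound over `ℓ` give
`ℙ(S < 1 - t) ≤ exp(-c m t²) + 4 L exp(-c m t / L)`.
This is at most `2 exp(-c' n t² / L²)`: the right side is at least `1` unless `n t² / L²` is
large, and then the factor `L` is absorbed by `exp(-c m t / L)`.
-/

open ProbabilityTheory Real Finset

lemma integral_withDensity_ofReal_eq {X : Type*} [MeasurableSpace X] {Q : Measure X}
    {w : X → ℝ} (hw : Measurable w) (hw0 : ∀ x, 0 ≤ w x) (g : X → ℝ) :
    ∫ x, g x ∂Q.withDensity (fun x => ENNReal.ofReal (w x)) = ∫ x, w x * g x ∂Q := by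
  rw [integral_withDensity_eq_integral_toReal_smul hw.ennreal_ofReal
    (ae_of_all _ fun _ => ENNReal.ofReal_lt_top)]
  simp only [ENNReal.toReal_ofReal (hw0 _), smul_eq_mul]

section Hoeffding

variable {ι X : Type*} [Fintype ι] [MeasurableSpace X] {Q : Measure X} [IsProbabilityMeasure Q]
  {f : X → ℝ} {B : ℝ}

lemma measureReal_pi_sum_ge_le (s : Finset ι) (hf : Measurable f) (hfB : ∀ x, |f x| ≤ B)
    (hmean : ∫ x, f x ∂Q = 0) {ε : ℝ} (hε : 0 ≤ ε) :
    (Measure.pi fun _ : ι => Q).real {ω | ε ≤ ∑ i ∈ s, f (ω i)} ≤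
      exp (-ε ^ 2 / (2 * #s * B ^ 2)) := by
  have hsubG : ∀ i, HasSubgaussianMGF (fun ω : ι → X => f (ω i)) ((‖B - -B‖₊ / 2) ^ 2)
      (Measure.pi fun _ => Q) := fun i =>
    hasSubgaussianMGF_of_mem_Icc_of_integral_eq_zero
      (hf.comp (measurable_pi_apply i)).aemeasurable
      (ae_of_all _ fun ω => abs_le.1 (hfB (ω i)))
      (by rw [integral_comp_eval hf.aestronglyMeasurable, hmean])
  refine (HasSubgaussianMGF.measure_sum_ge_le_of_iIndepFun
    (iIndepFun_pi fun _ => hf.aemeasurable) (fun i _ => hsubG i) hε).trans_eq ?_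
  have hB : ((‖B - -B‖₊ / 2) ^ 2 : NNReal) = (B ^ 2 : ℝ) := by
    simp [sub_neg_eq_add, ← two_mul, sq_abs]
  rw [Finset.sum_const, nsmul_eq_mul, NNReal.coe_mul, hB, NNReal.coe_natCast, mul_assoc]

lemma measureReal_pi_abs_sum_ge_le (s : Finset ι) (hf : Measurable f)
    (hfB : ∀ x, |f x| ≤ B) (hmean : ∫ x, f x ∂Q = 0) {ε : ℝ} (hε : 0 ≤ ε) :
    (Measure.pi fun _ : ι => Q).real {ω | ε ≤ |∑ i ∈ s, f (ω i)|} ≤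
      2 * exp (-ε ^ 2 / (2 * #s * B ^ 2)) := by
  have hsplit : {ω : ι → X | ε ≤ |∑ i ∈ s, f (ω i)|} ⊆
      {ω | ε ≤ ∑ i ∈ s, f (ω i)} ∪ {ω | ε ≤ ∑ i ∈ s, (-f) (ω i)} := by
    intro ω hω
    simp only [Set.mem_ofPred_eq, Set.mem_union, Pi.neg_apply, Finset.sum_neg_distrib] at hω ⊢
    exact le_abs'.1 hω |>.symm.imp_right (fun h => by linarith)
  calc _ ≤ _ := measureReal_mono hsplit
    _ ≤ _ := measureReal_union_le _ _
    _ ≤ _ := add_le_add (measureReal_pi_sum_ge_le s hf hfB hmean hε)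
        (measureReal_pi_sum_ge_le s hf.neg (fun x => by simpa using hfB x)
          (by simp [integral_neg, hmean]) hε)
    _ = _ := by ring

end Hoeffding

lemma sum_sum_mul_kernel_eq {X ι κ : Type*} [Fintype κ] (w : X → ℝ) (φ : κ → X → ℝ)
    (kL : X → X → ℝ) (hkL : ∀ a b, kL a b = ∑ ℓ, φ ℓ a * φ ℓ b) (x : ι → X) (S T : Finset ι) :
    ∑ i ∈ S, ∑ j ∈ T, w (x i) * w (x j) * kL (x j) (x i) =
      ∑ ℓ, (∑ i ∈ S, w (x i) * φ ℓ (x i)) * ∑ j ∈ T, w (x j) * φ ℓ (x j) := by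
  simp_rw [Finset.sum_mul_sum, hkL, Finset.mul_sum]
  rw [Finset.sum_comm_cycle]
  refine sum_congr rfl fun ℓ _ => sum_congr rfl fun i _ => sum_congr rfl fun j _ => ?_
  ring

lemma card_filter_lt_fin_two_mul (m : ℕ) : #{i : Fin (2 * m) | (i : ℕ) < m} = m := by
  rw [Fin.card_filter_val_lt]; omega

lemma card_filter_le_fin_two_mul (m : ℕ) : #{i : Fin (2 * m) | m ≤ (i : ℕ)} = m := by
  have := Finset.card_filter_add_card_filter_not (s := (univ : Finset (Fin (2 * m))))
    (fun i : Fin (2 * m) => (i : ℕ) < m)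
  simp only [not_lt, card_univ, Fintype.card_fin, card_filter_lt_fin_two_mul] at this
  omega

lemma sum_weights_eq {X κ : Type*} [Fintype κ] (w : X → ℝ) (φ : κ → X → ℝ)
    (kL : X → X → ℝ) (hkL : ∀ a b, kL a b = ∑ ℓ, φ ℓ a * φ ℓ b) {m : ℕ}
    (D0 D1 : Finset (Fin (2 * m)))
    (hD0 : D0 = Finset.univ.filter (fun i : Fin (2 * m) => (i : ℕ) < m))
    (hD1 : D1 = Finset.univ.filter (fun i : Fin (2 * m) => m ≤ (i : ℕ)))
    (x : Fin (2 * m) → X) (v : Fin (2 * m) → ℝ)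
    (hv : ∀ i, v i =
      if (i : ℕ) < m then
        (1 / (2 * m : ℝ)) * w (x i)
          - (2 / (2 * m : ℝ) ^ 2) * ∑ j ∈ D1, w (x i) * w (x j) * kL (x j) (x i)
      else
        (1 / (2 * m : ℝ)) * w (x i)
          - (2 / (2 * m : ℝ) ^ 2) * ∑ j ∈ D0, w (x i) * w (x j) * kL (x j) (x i)) :
    ∑ i, v i = 1 / (2 * m : ℝ) * ∑ i, w (x i) - 2 * (2 / (2 * m : ℝ) ^ 2) *
      ∑ ℓ, (∑ i ∈ D0, w (x i) * φ ℓ (x i)) * ∑ j ∈ D1, w (x j) * φ ℓ (x j) := by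
  have hsplit (g : Fin (2 * m) → ℝ) : ∑ i, g i = ∑ i ∈ D0, g i + ∑ i ∈ D1, g i := by
    simp only [hD0, hD1, ← not_lt, sum_filter_add_sum_filter_not]
  have hv0 : ∑ i ∈ D0, v i = 1 / (2 * m : ℝ) * ∑ i ∈ D0, w (x i) - (2 / (2 * m : ℝ) ^ 2) *
      ∑ i ∈ D0, ∑ j ∈ D1, w (x i) * w (x j) * kL (x j) (x i) := by
    rw [mul_sum, mul_sum, ← sum_sub_distrib]
    refine sum_congr rfl fun i hi => ?_
    rw [hv, if_pos (by simpa [hD0] using hi)]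
  have hv1 : ∑ i ∈ D1, v i = 1 / (2 * m : ℝ) * ∑ i ∈ D1, w (x i) - (2 / (2 * m : ℝ) ^ 2) *
      ∑ i ∈ D1, ∑ j ∈ D0, w (x i) * w (x j) * kL (x j) (x i) := by
    rw [mul_sum, mul_sum, ← sum_sub_distrib]
    refine sum_congr rfl fun i hi => ?_
    rw [hv, if_neg (by simpa [hD1] using hi)]
  rw [hsplit v, hsplit (fun i => w (x i)), hv0, hv1, sum_sum_mul_kernel_eq w φ kL hkL,
    sum_sum_mul_kernel_eq w φ kL hkL]
  simp only [mul_comm (∑ i ∈ D1, _)]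
  ring

lemma one_sub_le_weight_sum_of_abs_lt {κ : Type*} [Fintype κ] {m : ℕ} (hm : 0 < m) {t s σ : ℝ}
    {A B : κ → ℝ} (hσ : 2 * m - σ < m * t) (hA : ∀ ℓ, |A ℓ| < m * s) (hB : ∀ ℓ, |B ℓ| < m * s)
    (hs : Fintype.card κ * s ^ 2 ≤ t / 2) :
    1 - t ≤ 1 / (2 * m : ℝ) * σ - 2 * (2 / (2 * m : ℝ) ^ 2) * ∑ ℓ, A ℓ * B ℓ := by
  have hm' : (0 : ℝ) < m := Nat.cast_pos.2 hm
  have hAB : ∑ ℓ, A ℓ * B ℓ ≤ m ^ 2 * (t / 2) :=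
    calc ∑ ℓ, A ℓ * B ℓ ≤ ∑ _ℓ : κ, (m * s) * (m * s) := by
          refine sum_le_sum fun ℓ _ => (le_abs_self _).trans ?_
          rw [abs_mul]
          exact mul_le_mul (hA ℓ).le (hB ℓ).le (abs_nonneg _) ((abs_nonneg _).trans (hA ℓ).le)
      _ = m ^ 2 * (Fintype.card κ * s ^ 2) := by rw [sum_const, card_univ, nsmul_eq_mul]; ring
      _ ≤ m ^ 2 * (t / 2) := by gcongr
  have hfirst : 1 - t / 2 < 1 / (2 * m : ℝ) * σ := by
    rw [div_mul_eq_mul_div, one_mul, lt_div_iff₀ (by positivity)]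
    linarith
  have hsecond : 2 * (2 / (2 * m : ℝ) ^ 2) * ∑ ℓ, A ℓ * B ℓ ≤ t / 2 :=
    calc _ ≤ 2 * (2 / (2 * m : ℝ) ^ 2) * (m ^ 2 * (t / 2)) := by gcongr
      _ = t / 2 := by field_simp
  linarith

lemma measureReal_weight_sum_lt_le {X κ : Type*} [MeasurableSpace X] {Q : Measure X}
    [IsProbabilityMeasure Q] [Fintype κ] [Nonempty κ] {g : X → ℝ} {ψ : κ → X → ℝ} {B : ℝ}
    (hg : Measurable g) (hψ : ∀ ℓ, Measurable (ψ ℓ)) (hB : 0 < B) (hgB : ∀ x, |1 - g x| ≤ B)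
    (hψB : ∀ ℓ x, |ψ ℓ x| ≤ B) (hg1 : ∫ x, g x ∂Q = 1) (hψ0 : ∀ ℓ, ∫ x, ψ ℓ x ∂Q = 0)
    {m : ℕ} (hm : 0 < m) {D0 D1 : Finset (Fin (2 * m))} (hD0 : #D0 = m) (hD1 : #D1 = m)
    {t : ℝ} (ht : 0 < t) :
    (Measure.pi fun _ : Fin (2 * m) => Q).real {ω | 1 / (2 * m : ℝ) * ∑ i, g (ω i)
        - 2 * (2 / (2 * m : ℝ) ^ 2) *
          ∑ ℓ, (∑ i ∈ D0, ψ ℓ (ω i)) * ∑ j ∈ D1, ψ ℓ (ω j) < 1 - t} ≤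
      exp (-(m * t ^ 2 / (4 * B ^ 2))) +
        4 * Fintype.card κ * exp (-(m * t / Fintype.card κ / (4 * B ^ 2))) := by
  set L : ℝ := (Fintype.card κ : ℝ)
  have hL : 0 < L := Nat.cast_pos.2 Fintype.card_pos
  have hm' : (0 : ℝ) < m := Nat.cast_pos.2 hm
  set s := √(t / (2 * L))
  have hs : s ^ 2 = t / (2 * L) := sq_sqrt (by positivity)
  have hsub : {ω : Fin (2 * m) → X | 1 / (2 * m : ℝ) * ∑ i, g (ω i)
        - 2 * (2 / (2 * m : ℝ) ^ 2) * ∑ ℓ, (∑ i ∈ D0, ψ ℓ (ω i)) * ∑ j ∈ D1, ψ ℓ (ω j) < 1 - t} ⊆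
      {ω | m * t ≤ ∑ i, (1 - g (ω i))} ∪
        ⋃ ℓ, ({ω | m * s ≤ |∑ i ∈ D0, ψ ℓ (ω i)|} ∪ {ω | m * s ≤ |∑ i ∈ D1, ψ ℓ (ω i)|}) := by
    intro ω hω
    by_contra hnot
    simp only [Set.mem_union, Set.mem_iUnion, Set.mem_ofPred_eq, not_or, not_exists, not_le,
      sum_sub_distrib, sum_const, card_univ, Fintype.card_fin, nsmul_eq_mul, mul_one,
      Nat.cast_mul, Nat.cast_ofNat] at hnot
    refine (one_sub_le_weight_sum_of_abs_lt hm hnot.1 (fun ℓ => (hnot.2 ℓ).1)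
      (fun ℓ => (hnot.2 ℓ).2) (le_of_eq ?_)).not_gt hω
    change L * s ^ 2 = t / 2
    rw [hs]
    field_simp
  have hg0 : ∫ x, (1 - g x) ∂Q = 0 := by
    rw [integral_sub (integrable_const 1) (.of_integral_ne_zero (hg1 ▸ one_ne_zero)), hg1]
    simp
  have hE0 := measureReal_pi_sum_ge_le (Q := Q) (univ : Finset (Fin (2 * m)))
    (measurable_const.sub hg) hgB hg0 (ε := m * t) (by positivity)
  have hE (D : Finset (Fin (2 * m))) (ℓ : κ) :=
    measureReal_pi_abs_sum_ge_le (Q := Q) D (hψ ℓ) (hψB ℓ) (hψ0 ℓ) (ε := m * s)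
      (by positivity)
  calc _ ≤ _ := measureReal_mono hsub
    _ ≤ _ := (measureReal_union_le _ _).trans <| add_le_add_right
        ((measureReal_iUnion_fintype_le _).trans <| sum_le_sum fun _ _ => measureReal_union_le _ _) _
    _ ≤ _ := add_le_add hE0 (sum_le_sum fun ℓ _ => add_le_add (hE D0 ℓ) (hE D1 ℓ))
    _ = _ := by
      rw [hD0, hD1, card_univ, Fintype.card_fin, sum_const, card_univ, nsmul_eq_mul]
      have e1 : -((m : ℝ) * t) ^ 2 / (2 * ((2 * m : ℕ) : ℝ) * B ^ 2) =
          -(m * t ^ 2 / (4 * B ^ 2)) := by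
        push_cast; field_simp; ring
      have e2 : -((m : ℝ) * s) ^ 2 / (2 * m * B ^ 2) = -(m * t / L / (4 * B ^ 2)) := by
        rw [mul_pow, hs]; field_simp; ring
      rw [e1, e2]; ring

lemma le_two_mul_exp_of_le_exp_add {a L m t p : ℝ} (ha : 0 < a) (hL : 1 ≤ L) (hm : 0 ≤ m)
    (ht : 0 ≤ t) (ht1 : t ≤ 1) (hp1 : p ≤ 1)
    (hp : p ≤ exp (-(m * t ^ 2 / a)) + 4 * L * exp (-(m * t / L / a))) :
    p ≤ 2 * exp (-(log 2 / (8 * a) * (m * t ^ 2 / L ^ 2))) := by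
  set x := m * t ^ 2 / L ^ 2
  have hx : 0 ≤ x := by positivity
  have hlog2 : 0 < log 2 := log_pos one_lt_two
  have hlog2' : log 2 < 1 := by linarith [log_two_lt_d9]
  by_cases hsmall : log 2 / (8 * a) * x ≤ log 2
  · calc p ≤ 2 * exp (-log 2) := by rw [exp_neg, exp_log two_pos]; linarith
      _ ≤ _ := by gcongr
  rw [not_le, div_mul_eq_mul_div, lt_div_iff₀ (by positivity)] at hsmall
  have hxa : 8 * a ≤ x := by nlinarith
  have hL0 : 0 < L := by linarith
  have hxL : x * L ≤ m * t / L :=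
    calc x * L = m * t ^ 2 / L := by simp only [x]; field_simp
      _ ≤ m * t / L := by gcongr; nlinarith
  have hxm : x ≤ m * t ^ 2 := div_le_self (by positivity) (one_le_pow₀ hL)
  have h1 : exp (-(m * t ^ 2 / a)) ≤ exp (-(log 2 / (8 * a) * x)) := by
    gcongr
    rw [div_mul_eq_mul_div, div_le_div_iff₀ (by positivity) ha]
    have : log 2 * x ≤ 8 * (m * t ^ 2) := by nlinarith
    nlinarith [mul_le_mul_of_nonneg_right this ha.le]
  have h2 : 4 * L * exp (-(m * t / L / a)) ≤ exp (-(log 2 / (8 * a) * x)) :=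
    calc 4 * L * exp (-(m * t / L / a)) ≤ exp (x * L / (2 * a)) * exp (-(x * L / a)) := by
          gcongr
          have : 4 * L ≤ x * L / (2 * a) := by rw [le_div_iff₀ (by positivity)]; nlinarith
          linarith [add_one_le_exp (x * L / (2 * a))]
      _ = exp (-(x * L / (2 * a))) := by rw [← exp_add]; ring_nf
      _ ≤ _ := by
          gcongr
          rw [div_mul_eq_mul_div, div_le_div_iff₀ (by positivity) (by positivity)]
          have : log 2 * x ≤ 4 * (x * L) := by nlinarith
          nlinarith [mul_le_mul_of_nonneg_right this (by positivity : (0 : ℝ) ≤ 2 * a)]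
  linarith

lemma abs_one_sub_le_max {w M : ℝ} (hw0 : 0 ≤ w) (hw : w ≤ M) : |1 - w| ≤ max M 1 :=
  abs_le.2 ⟨by linarith [le_max_left M 1], by linarith [le_max_right M 1]⟩

lemma abs_mul_le_max_mul_sqrt {w a M N : ℝ} (hw0 : 0 ≤ w) (hw : w ≤ M) (ha : |a| ^ 2 ≤ N) :
    |w * a| ≤ max M 1 * √N := by
  rw [abs_mul, abs_of_nonneg hw0]
  exact mul_le_mul (hw.trans (le_max_left _ _)) (abs_le_sqrt ((sq_abs a).symm.trans_le ha))
    (abs_nonneg _) (by positivity)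

/-- **Lower-tail bound of part (ii) of Lemma B.6** (`lem:ineq`) of the paper: there is a
constant `c > 0` depending only on `M₂` and `M₃` such that the sum `S = ∑_i w_i` of the
control-variate reference weights (which has mean `1`) satisfies
`ℙ(S < 1 − t) ≤ 2 exp(−c n t² / L²)` for every `L ≥ 1`, every even `n = 2m`, and every
`t ∈ (0, 1]`.  Here `0 ≤ w* = dP/dQ ≤ M₃`, `|φ_ℓ(x)|² ≤ M₂`, `∫ φ_ℓ dP = 0`, and
`k_L(x,y) = ∑_ℓ φ_ℓ(x) φ_ℓ(y)`. -/
theorem stmt14 (M2 M3 : ℝ) :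
    ∃ c : ℝ, 0 < c ∧
      ∀ (X : Type u) [MeasurableSpace X] (P Q : Measure X),
        IsProbabilityMeasure P → IsProbabilityMeasure Q →
        ∀ (w : X → ℝ), Measurable w → (∀ x, 0 ≤ w x) → (∀ x, w x ≤ M3) →
        P = Q.withDensity (fun x => ENNReal.ofReal (w x)) →
        ∀ (L : ℕ), 1 ≤ L →
        ∀ (φ : Fin L → X → ℝ), (∀ ℓ, Measurable (φ ℓ)) →
        (∀ ℓ x, |φ ℓ x| ^ 2 ≤ M2) → (∀ ℓ, ∫ x, φ ℓ x ∂P = 0) →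
        ∀ (kL : X → X → ℝ), (∀ a b, kL a b = ∑ ℓ, φ ℓ a * φ ℓ b) →
        ∀ (m : ℕ) (D0 D1 : Finset (Fin (2 * m))),
        D0 = Finset.univ.filter (fun i : Fin (2 * m) => (i : ℕ) < m) →
        D1 = Finset.univ.filter (fun i : Fin (2 * m) => m ≤ (i : ℕ)) →
        ∀ (W : (Fin (2 * m) → X) → Fin (2 * m) → ℝ),
        (∀ ω i, W ω i =
          if (i : ℕ) < m then
            (1 / (2 * m : ℝ)) * w (ω i)
              - (2 / (2 * m : ℝ) ^ 2) * ∑ j ∈ D1, w (ω i) * w (ω j) * kL (ω j) (ω i)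
          else
            (1 / (2 * m : ℝ)) * w (ω i)
              - (2 / (2 * m : ℝ) ^ 2) * ∑ j ∈ D0, w (ω i) * w (ω j) * kL (ω j) (ω i)) →
        ∀ t : ℝ, 0 < t → t ≤ 1 →
          (Measure.pi fun _ : Fin (2 * m) => Q) {ω | (∑ i, W ω i) < 1 - t}
            ≤ ENNReal.ofReal
                (2 * Real.exp (-(c * (2 * m : ℝ) * t ^ 2) / (L : ℝ) ^ 2)) := by
  set B := max M3 1 * (√M2 + 1)
  have hB1 : 1 ≤ B := one_le_mul_of_one_le_of_one_le (le_max_right _ _)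
    (le_add_of_nonneg_left (sqrt_nonneg _))
  refine ⟨log 2 / (8 * (4 * B ^ 2)) / 2, by positivity, ?_⟩
  intro X _ P Q _ _ w hw hw0 hwM3 hP L hL φ hφ hφM2 hφ0 kL hkL m D0 D1 hD0 hD1 W hW t ht ht1
  rcases Nat.eq_zero_or_pos m with rfl | hm
  · refine prob_le_one.trans ?_
    simp
  have hwB (x : X) : |1 - w x| ≤ B := (abs_one_sub_le_max (hw0 x) (hwM3 x)).trans
    (le_mul_of_one_le_right (by positivity) (le_add_of_nonneg_left (sqrt_nonneg _)))
  have hψB (ℓ : Fin L) (x : X) : |w x * φ ℓ x| ≤ B :=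
    (abs_mul_le_max_mul_sqrt (hw0 x) (hwM3 x) (hφM2 ℓ x)).trans
      (mul_le_mul_of_nonneg_left (le_add_of_nonneg_right zero_le_one) (by positivity))
  have hw1 : ∫ x, w x ∂Q = 1 := by
    have h := integral_withDensity_ofReal_eq (Q := Q) hw hw0 fun _ => (1 : ℝ)
    rw [← hP] at h
    simpa using h.symm
  have hψ0 (ℓ : Fin L) : ∫ x, w x * φ ℓ x ∂Q = 0 := by
    rw [← hφ0 ℓ, hP, integral_withDensity_ofReal_eq hw hw0]
  have : NeZero L := ⟨by omega⟩
  have hcore := measureReal_weight_sum_lt_le (ψ := fun ℓ x => w x * φ ℓ x) hw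
    (fun ℓ => hw.mul (hφ ℓ)) (by positivity) hwB hψB hw1 hψ0 hm
    (hD0 ▸ card_filter_lt_fin_two_mul m) (hD1 ▸ card_filter_le_fin_two_mul m) ht
  rw [Fintype.card_fin] at hcore
  have hbound := le_two_mul_exp_of_le_exp_add (by positivity) (Nat.one_le_cast.2 hL)
    (Nat.cast_nonneg m) ht.le ht1 measureReal_le_one hcore
  have hsum : {ω | ∑ i, W ω i < 1 - t} = {ω | 1 / (2 * m : ℝ) * ∑ i, w (ω i)
      - 2 * (2 / (2 * m : ℝ) ^ 2) *
        ∑ ℓ, (∑ i ∈ D0, w (ω i) * φ ℓ (ω i)) * ∑ j ∈ D1, w (ω j) * φ ℓ (ω j) < 1 - t} :=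
    Set.ext fun ω => by
      rw [Set.mem_ofPred_eq, Set.mem_ofPred_eq,
        sum_weights_eq w φ kL hkL D0 D1 hD0 hD1 ω (W ω) (hW ω)]
  rw [← ofReal_measureReal, hsum]
  refine ENNReal.ofReal_le_ofReal (hbound.trans_eq ?_)
  ring_nf
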